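/- ∫₀^{ϖ/2} sl(t) dt = π/4. -/

import Mathlib

open Set MeasureTheory Filter

/-- Generalized arcsine: `arcsin_{p,q}(x) = ∫₀ˣ (1 - tᵠ)^(-1/p) dt`. -/
noncomputable def gArcsin (p q x : ℝ) : ℝ := ∫ t in (0:ℝ)..x, (1 - t ^ q) ^ (-(1 / p))

/-- Generalized pi: `π_{p,q} = 2 ∫₀¹ (1 - tᵠ)^(-1/p) dt`. -/
noncomputable def gPi (p q : ℝ) : ℝ := 2 * gArcsin p q 1

/-- `S` is the generalized sine `sin_{p,q}` (the inverse of `gArcsin p q` on `[0,1]`). -/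
def IsGSin (p q : ℝ) (S : ℝ → ℝ) : Prop :=
  ∀ y ∈ Icc (0:ℝ) 1, S (gArcsin p q y) = y

/-- `C` is the generalized cosine `cos_{p,q}`, the derivative of `S = sin_{p,q}`
on `[0, π_{p,q}/2]`. -/
def IsGCos (p q : ℝ) (S C : ℝ → ℝ) : Prop :=
  ∀ x ∈ Icc (0:ℝ) (gPi p q / 2), HasDerivWithinAt S (C x) (Icc (0:ℝ) (gPi p q / 2)) x

/-! Since `sl` inverts `arcsin_{2,4}`, the substitution `t = arcsin_{2,4} y` turns `∫₀^{ϖ/2} sl`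
into `∫₀¹ y (1 - y⁴)^(-1/2) dy`, which has the elementary primitive `arcsin (y²) / 2`.
The substitution is the change-of-variables formula for the injective map `arcsin_{p,q}` of
`(0, 1)` onto `(0, π_{p,q}/2)`, which asks nothing of the integrand, so no regularity of `sl`
is needed. -/

section GeneralizedSine

variable {p q : ℝ}

lemma intervalIntegrable_gArcsin_integrand (hp : 1 < p) (hq : 1 ≤ q) :
    IntervalIntegrable (fun t : ℝ => (1 - t ^ q) ^ (-(1 / p))) volume 0 1 := by
  have hexp : -(1 / p) ≤ 0 := by
    have : 0 < 1 / p := by positivity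
    linarith
  have hdom : IntervalIntegrable (fun t : ℝ => (1 - t) ^ (-(1 / p))) volume 0 1 := by
    have hgt : -1 < -(1 / p) := by
      have : 1 / p < 1 := (div_lt_one (by linarith)).2 hp
      linarith
    simpa using
      ((intervalIntegral.intervalIntegrable_rpow' (a := 0) (b := 1) hgt).comp_sub_left 1).symm
  refine hdom.mono_fun (Measurable.aestronglyMeasurable (by fun_prop)) ?_
  rw [uIoc_of_le zero_le_one]
  filter_upwards [ae_restrict_mem measurableSet_Ioc] with t ⟨ht0, ht1⟩
  have htq : t ^ q ≤ t := Real.rpow_le_self_of_le_one ht0.le ht1 hq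
  rw [Real.norm_of_nonneg (Real.rpow_nonneg (by linarith) _),
    Real.norm_of_nonneg (Real.rpow_nonneg (by linarith) _)]
  rcases ht1.lt_or_eq with ht1 | rfl
  · exact Real.rpow_le_rpow_of_nonpos (by linarith) (by linarith) hexp
  · simp

lemma intervalIntegrable_gArcsin_integrand_of_mem (hp : 1 < p) (hq : 1 ≤ q) {y : ℝ}
    (hy : y ∈ Icc (0:ℝ) 1) :
    IntervalIntegrable (fun t : ℝ => (1 - t ^ q) ^ (-(1 / p))) volume 0 y :=
  (intervalIntegrable_gArcsin_integrand hp hq).mono_set <| by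
    rw [uIcc_of_le hy.1, uIcc_of_le zero_le_one]
    exact Icc_subset_Icc le_rfl hy.2

lemma continuousAt_gArcsin_integrand (hq : 0 < q) {x : ℝ} (hx : x ∈ Ioo (0:ℝ) 1) :
    ContinuousAt (fun t : ℝ => (1 - t ^ q) ^ (-(1 / p))) x := by
  have hxq : x ^ q ≠ 1 := (Real.rpow_lt_one hx.1.le hx.2 hq).ne
  exact (continuousAt_const.sub (continuousAt_id.rpow_const (Or.inl hx.1.ne'))).rpow_const
    (Or.inl (sub_ne_zero.2 hxq.symm))

lemma hasDerivAt_gArcsin (hp : 1 < p) (hq : 1 ≤ q) {x : ℝ} (hx : x ∈ Ioo (0:ℝ) 1) :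
    HasDerivAt (gArcsin p q) ((1 - x ^ q) ^ (-(1 / p))) x :=
  intervalIntegral.integral_hasDerivAt_right
    (intervalIntegrable_gArcsin_integrand_of_mem hp hq (Ioo_subset_Icc_self hx))
    (ContinuousAt.stronglyMeasurableAtFilter isOpen_Ioo
      (fun _ hy => continuousAt_gArcsin_integrand (by linarith) hy) x hx)
    (continuousAt_gArcsin_integrand (by linarith) hx)

lemma continuousOn_gArcsin (hp : 1 < p) (hq : 1 ≤ q) : ContinuousOn (gArcsin p q) (Icc 0 1) := by
  have hint := (intervalIntegrable_iff_integrableOn_Icc_of_le zero_le_one).1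
    (intervalIntegrable_gArcsin_integrand hp hq)
  rw [← uIcc_of_le zero_le_one] at hint ⊢
  exact intervalIntegral.continuousOn_primitive_interval hint

lemma strictMonoOn_gArcsin (hp : 1 < p) (hq : 1 ≤ q) : StrictMonoOn (gArcsin p q) (Icc 0 1) :=
  strictMonoOn_of_deriv_pos (convex_Icc 0 1) (continuousOn_gArcsin hp hq) fun x hx => by
    rw [interior_Icc] at hx
    rw [(hasDerivAt_gArcsin hp hq hx).deriv]
    exact Real.rpow_pos_of_pos (sub_pos.2 (Real.rpow_lt_one hx.1.le hx.2 (by linarith))) _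

lemma gArcsin_zero : gArcsin p q 0 = 0 := intervalIntegral.integral_same

lemma gArcsin_one : gArcsin p q 1 = gPi p q / 2 := by
  rw [gPi]; ring

lemma gArcsin_image_Ioo (hp : 1 < p) (hq : 1 ≤ q) :
    gArcsin p q '' Ioo 0 1 = Ioo 0 (gPi p q / 2) := by
  rw [(continuousOn_gArcsin hp hq).image_Ioo_of_strictMonoOn zero_le_one
    (strictMonoOn_gArcsin hp hq), gArcsin_zero, gArcsin_one]

theorem integral_gSin_eq (hp : 1 < p) (hq : 1 ≤ q) {S : ℝ → ℝ} (hS : IsGSin p q S) :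
    ∫ t in (0:ℝ)..gPi p q / 2, S t = ∫ y in (0:ℝ)..1, y * (1 - y ^ q) ^ (-(1 / p)) := by
  have hc : 0 ≤ gPi p q / 2 := by
    rw [← gArcsin_one, ← gArcsin_zero (p := p) (q := q)]
    exact (strictMonoOn_gArcsin hp hq).monotoneOn (left_mem_Icc.2 zero_le_one)
      (right_mem_Icc.2 zero_le_one) zero_le_one
  have hsubst := integral_image_eq_integral_abs_deriv_smul measurableSet_Ioo
    (fun x hx => (hasDerivAt_gArcsin hp hq hx).hasDerivWithinAt)
    ((strictMonoOn_gArcsin hp hq).injOn.mono Ioo_subset_Icc_self) S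
  rw [gArcsin_image_Ioo hp hq] at hsubst
  rw [intervalIntegral.integral_of_le hc, intervalIntegral.integral_of_le zero_le_one,
    integral_Ioc_eq_integral_Ioo, integral_Ioc_eq_integral_Ioo, hsubst]
  refine setIntegral_congr_fun measurableSet_Ioo fun x hx => ?_
  rw [hS x (Ioo_subset_Icc_self hx), smul_eq_mul, mul_comm, abs_of_nonneg (Real.rpow_nonneg
    (sub_nonneg.2 (Real.rpow_le_one hx.1.le hx.2.le (by linarith))) _)]

end GeneralizedSine

theorem integral_mul_one_sub_pow_four_rpow_neg_half :
    ∫ y in (0:ℝ)..1, y * (1 - y ^ 4) ^ (-(1 / 2 : ℝ)) = Real.pi / 4 := by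
  have hderiv : ∀ x ∈ Ioo (0:ℝ) 1, HasDerivAt (fun y => Real.arcsin (y ^ 2) / 2)
      (x * (1 - x ^ 4) ^ (-(1 / 2 : ℝ))) x := by
    intro x ⟨hx0, hx1⟩
    have hx2 : x ^ 2 < 1 := pow_lt_one₀ hx0.le hx1 two_ne_zero
    have hx4 : 0 < 1 - x ^ 4 := by nlinarith
    have h := ((Real.hasDerivAt_arcsin (by nlinarith) hx2.ne).comp (h := fun y : ℝ => y ^ 2) x
      (hasDerivAt_pow 2 x)).div_const 2
    refine h.congr_deriv ?_
    rw [Real.rpow_neg hx4.le, ← Real.sqrt_eq_rpow]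
    field_simp
    ring
  have hcont : ContinuousOn (fun y : ℝ => Real.arcsin (y ^ 2) / 2) (Icc 0 1) :=
    ((Real.continuous_arcsin.comp (continuous_pow 2)).div_const 2).continuousOn
  have hnonneg : ∀ x ∈ Ioo (0:ℝ) 1, 0 ≤ x * (1 - x ^ 4) ^ (-(1 / 2 : ℝ)) := fun x hx =>
    mul_nonneg hx.1.le (Real.rpow_nonneg (sub_nonneg.2 (pow_le_one₀ hx.1.le hx.2.le)) _)
  rw [intervalIntegral.integral_eq_sub_of_hasDerivAt_of_le zero_le_one hcont hderiv
    ((intervalIntegrable_iff_integrableOn_Ioc_of_le zero_le_one).2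
      (intervalIntegral.integrableOn_deriv_of_nonneg hcont hderiv hnonneg))]
  norm_num [Real.arcsin_one]
  ring

/-- Corollary 3.3, second part: `∫₀^{ϖ/2} sl(t) dt = π/4`, where `sl = sin_{2,4}`
is the lemniscate sine and `ϖ = π_{2,4}` is the lemniscate constant. -/
theorem stmt_7 (S : ℝ → ℝ) (hS : IsGSin 2 4 S) :
    ∫ t in (0:ℝ)..(gPi 2 4 / 2), S t = Real.pi / 4 := by
  rw [integral_gSin_eq one_lt_two (by norm_num) hS]
  simpa only [Real.rpow_ofNat] using integral_mul_one_sub_pow_four_rpow_neg_half
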